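/- Let C ⊆ 𝐒 be balanced, and assume that for some N > 0 the element N − x_1² − ⋯ − x_n² of ℝ⟨x⟩ is a conic combination (a finite sum with nonnegative coefficients) of elements of C ∩ ℝ⟨x⟩_2 and hermitian squares pp⋆ with p ∈ ℝ⟨x⟩_1. If L ∈ (M(C)_d)^∨ and L(1) = 0, then L = 0. -/

import Mathlib

/-!
Extend `L` to a linear functional `Λ` on all of `𝒮`. On nc state polynomials of degree `≤ d`,
`B(f, g) = Λ(ς(f g⋆))` is then a positive semidefinite form, so (Cauchy–Schwarz) every
isotropic vector `B(f, f) = 0` lies in its radical. Isotropy starts at `B(1, 1) = L(1) = 0` and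
spreads to every `s v` (`s` a monomial in the `ς(u)`, `v` a word) of degree `≤ d`: a letter
`xⱼ` is appended using the certificate `N − ∑ xⱼ² = ∑ tᵢ gᵢ`, which gives
`∑ⱼ B(F xⱼ, F xⱼ) ≤ N B(F, F)`, and a factor `ς(u)` of `s` is traded for the word `u` since
`B(s u, ς(u) s) = B(ς(u) s, ς(u) s)`. Finally, cutting at most one `ς(u)` in two, every monomial
of degree `≤ 2d` is some `B(f, g)` with `f` isotropic of degree `≤ d`, so `L` kills it.
-/

open scoped BigOperators Matrix Kronecker

namespace StatePoly

/-! ### Words and symmetrized words -/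

/-- Words in the letters `x_1, …, x_n`: the free monoid on `Fin n`. -/
abbrev Word (n : ℕ) := FreeMonoid (Fin n)

/-- The word reversal (the involution `⋆` on words). -/
def wordRev {n : ℕ} (w : Word n) : Word n := FreeMonoid.reverse w

/-- Two nonempty words are identified iff they are equal or reverses of each other;
this realizes the relation `ς(w) = ς(w⋆)`. -/
def wordSetoid (n : ℕ) : Setoid {l : List (Fin n) // l ≠ []} where
  r u v := u.1 = v.1 ∨ u.1 = v.1.reverse
  iseqv := by
    constructor
    · intro u; exact Or.inl rfl
    · rintro u v (h | h)
      · exact Or.inl h.symm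
      · right; rw [h, List.reverse_reverse]
    · rintro u v w (h1 | h1) (h2 | h2)
      · exact Or.inl (h1.trans h2)
      · right; rw [h1, h2]
      · right; rw [h1, h2]
      · left; rw [h1, h2, List.reverse_reverse]

/-- Symbols `ς(w)`, `w` a nonempty word, modulo `ς(w) = ς(w⋆)`. -/
def SW (n : ℕ) := Quotient (wordSetoid n)

/-- The commutative algebra `𝒮` of state polynomials:
a polynomial ring in the symbols `ς(w)`. -/
abbrev SPoly (n : ℕ) := MvPolynomial (SW n) ℝ

/-- The algebra `𝐒 = 𝒮 ⊗ ℝ⟨x⟩` of nc state polynomials, realized as the monoid algebra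
of the free monoid over the polynomial ring `𝒮`. -/
abbrev NCSPoly (n : ℕ) := MonoidAlgebra (SPoly n) (Word n)

variable {n : ℕ}

/-- The state symbol `ς(w)` of a word, with `ς(1) = 1`. -/
noncomputable def sigWordL (l : List (Fin n)) : SPoly n :=
  if h : l = [] then 1 else MvPolynomial.X (Quotient.mk (wordSetoid n) ⟨l, h⟩)

/-- The unital `𝒮`-linear map `ς : 𝐒 → 𝒮`. -/
noncomputable def sig (f : NCSPoly n) : SPoly n :=
  Finsupp.sum f.coeff fun w c => c * sigWordL (FreeMonoid.toList w)

/-- The involution `⋆` on `𝐒`: it fixes `𝒮 ∪ {x_1, …, x_n}` pointwise and reverses words. -/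
noncomputable def ncStar (f : NCSPoly n) : NCSPoly n :=
  MonoidAlgebra.ofCoeff (Finsupp.mapDomain wordRev f.coeff)

/-- The embedding `𝒮 ⊆ 𝐒`. -/
noncomputable def iotaS (p : SPoly n) : NCSPoly n := MonoidAlgebra.single 1 p

/-- The variable `x_i` as an nc state polynomial. -/
noncomputable def ncX (i : Fin n) : NCSPoly n := MonoidAlgebra.single (FreeMonoid.of i) 1

/-- A real constant as an nc state polynomial. -/
noncomputable def ncConst (r : ℝ) : NCSPoly n := iotaS (MvPolynomial.C r)

/-- `f ∈ 𝐒` lies in the free algebra `ℝ⟨x⟩ ⊆ 𝐒` iff all its coefficients are real constants. -/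
def IsFreePoly (f : NCSPoly n) : Prop := ∀ w : Word n, ∃ r : ℝ, f.coeff w = MvPolynomial.C r

/-! ### Degrees -/

/-- `|w|` on symmetrized words. -/
def swDeg : SW n → ℕ :=
  Quotient.lift (fun l : {l : List (Fin n) // l ≠ []} => l.1.length)
    (by rintro u v (h | h) <;> simp [h])

/-- The degree of a monomial `∏ ς(u_j)^{e_j}`, namely `∑ e_j |u_j|`. -/
def monoWeight (m : SW n →₀ ℕ) : ℕ := m.sum fun q e => e * swDeg q

/-- The degree of a state polynomial. -/
noncomputable def sDeg (p : SPoly n) : ℕ := p.support.sup monoWeight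

/-- The degree of an nc state polynomial: the maximum over the `𝐒`-words appearing in it of
`deg ς(u_1)⋯ς(u_m)v = |v| + ∑_j |u_j|`. -/
noncomputable def ncDeg (f : NCSPoly n) : ℕ :=
  (Finsupp.support f.coeff).sup fun w => sDeg (f.coeff w) + (FreeMonoid.toList w).length

lemma sDeg_zero : sDeg (0 : SPoly n) = 0 := by
  simp [sDeg, MvPolynomial.support_zero]

lemma sDeg_add_le (p q : SPoly n) : sDeg (p + q) ≤ max (sDeg p) (sDeg q) := by
  classical
  refine Finset.sup_le fun m hm => ?_
  rcases Finset.mem_union.mp (MvPolynomial.support_add hm) with h | h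
  · exact le_max_of_le_left (Finset.le_sup h)
  · exact le_max_of_le_right (Finset.le_sup h)

lemma sDeg_smul_le (c : ℝ) (p : SPoly n) : sDeg (c • p) ≤ sDeg p :=
  Finset.sup_le fun _m hm => Finset.le_sup (MvPolynomial.support_smul hm)

lemma sDeg_one : sDeg (1 : SPoly n) = 0 := by
  classical
  refine le_antisymm (Finset.sup_le fun m hm => ?_) (Nat.zero_le _)
  have : m = 0 := by
    by_contra h
    have := MvPolynomial.mem_support_iff.mp hm
    rw [MvPolynomial.coeff_one, if_neg (fun he => h he.symm)] at this
    exact this rfl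
  subst this
  simp [monoWeight]

/-- The subspace `𝒮_{k}` of state polynomials of degree at most `k`. -/
noncomputable def SPolyLe (n k : ℕ) : Submodule ℝ (SPoly n) where
  carrier := {p | sDeg p ≤ k}
  add_mem' := fun {p q} hp hq =>
    le_trans (sDeg_add_le p q) (max_le hp hq)
  zero_mem' := by simp [Set.mem_setOf_eq, sDeg_zero]
  smul_mem' := fun c p hp => le_trans (sDeg_smul_le c p) hp

lemma one_mem_SPolyLe (k : ℕ) : (1 : SPoly n) ∈ SPolyLe n k := by
  show sDeg (1 : SPoly n) ≤ k
  simp [sDeg_one]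

/-- Extension by zero of a linear functional on `𝒮_{k}` to `𝒮`
(used to refer to values of truncated functionals). -/
noncomputable def lext {n k : ℕ} (L : SPolyLe n k →ₗ[ℝ] ℝ) (p : SPoly n) : ℝ :=
  if h : sDeg p ≤ k then L ⟨p, h⟩ else 0

/-! ### Evaluations -/

section Eval

variable {A : Type*} [Ring A] [Module ℝ A]

/-- Evaluation of a word at a tuple `X`. -/
noncomputable def wEvalL (X : Fin n → A) (l : List (Fin n)) : A := (l.map X).prod

/-- The value assigned to the symbol `ς(w)`: `λ(w(X))`. -/
noncomputable def stVal (lam : A → ℝ) (X : Fin n → A) (q : SW n) : ℝ :=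
  lam (wEvalL X (Quotient.out q).1)

/-- Evaluation `a(λ; X) ∈ ℝ` of a state polynomial. -/
noncomputable def sEval (lam : A → ℝ) (X : Fin n → A) (p : SPoly n) : ℝ :=
  MvPolynomial.eval (stVal lam X) p

/-- Evaluation `f(λ; X) ∈ A` of an nc state polynomial. -/
noncomputable def ncEval (lam : A → ℝ) (X : Fin n → A) (f : NCSPoly n) : A :=
  Finsupp.sum f.coeff fun w c => sEval lam X c • wEvalL X (FreeMonoid.toList w)

end Eval

/-! ### States on matrix algebras -/

/-- A density matrix: positive semidefinite with trace 1. -/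
def IsDensity {k : ℕ} (ρ : Matrix (Fin k) (Fin k) ℝ) : Prop :=
  ρ.PosSemidef ∧ ρ.trace = 1

/-- The state on `k×k` matrices induced by a density matrix. -/
noncomputable def matState {k : ℕ} (ρ : Matrix (Fin k) (Fin k) ℝ) :
    Matrix (Fin k) (Fin k) ℝ → ℝ := fun Y => (ρ * Y).trace

/-- The vector state on `k×k` matrices induced by a vector `ψ`. -/
noncomputable def vecStateM {k : ℕ} (ψ : Fin k → ℝ) :
    Matrix (Fin k) (Fin k) ℝ → ℝ := fun Y => ψ ⬝ᵥ Y.mulVec ψ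

/-! ### States on B(H) -/

section Op

variable (H : Type*) [NormedAddCommGroup H] [InnerProductSpace ℝ H] [CompleteSpace H]

/-- A state on `B(H)`: a unital positive `⋆`-linear functional. -/
def IsState (lam : (H →L[ℝ] H) →ₗ[ℝ] ℝ) : Prop :=
  lam 1 = 1 ∧ (∀ Y : H →L[ℝ] H, lam (ContinuousLinearMap.adjoint Y) = lam Y) ∧
    ∀ Y : H →L[ℝ] H, 0 ≤ lam (Y * ContinuousLinearMap.adjoint Y)

/-- A vector state on `B(H)`. -/
def IsVecState (lam : (H →L[ℝ] H) →ₗ[ℝ] ℝ) : Prop :=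
  ∃ v : H, ‖v‖ = 1 ∧ ∀ Y : H →L[ℝ] H, lam Y = inner ℝ (Y v) v

/-- The state semialgebraic set `𝒟_C^∞` determined by the constraint set `C ⊆ 𝐒`. -/
def DCinf (C : Set (NCSPoly n)) :
    Set ((((H →L[ℝ] H) →ₗ[ℝ] ℝ)) × (Fin n → (H →L[ℝ] H))) :=
  {p | IsState H p.1 ∧ (∀ i, ContinuousLinearMap.adjoint (p.2 i) = p.2 i) ∧
    ∀ c ∈ C, (ncEval (⇑p.1) p.2 c).IsPositive}

/-- The subset `vec-𝒟_C^∞` of `𝒟_C^∞` in which the state is a vector state. -/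
def vecDCinf (C : Set (NCSPoly n)) :
    Set ((((H →L[ℝ] H) →ₗ[ℝ] ℝ)) × (Fin n → (H →L[ℝ] H))) :=
  {p ∈ DCinf H C | IsVecState H p.1}

end Op

/-! ### Positivity structures -/

/-- `Ω`: sums of products of elements `ς(h h⋆)`, `h ∈ 𝐒`. -/
def Omega (n : ℕ) : Set (SPoly n) :=
  {x | ∃ (m : ℕ) (g : Fin m → SPoly n),
    (∀ i, ∃ (mi : ℕ) (h : Fin mi → NCSPoly n), g i = ∏ j, sig (h j * ncStar (h j))) ∧
    x = ∑ i, g i}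

/-- Membership in the smallest subset of `𝒮` containing `{1} ∪ S` that is closed under
addition and under multiplication by squares of elements of `A`. -/
inductive QMemIn (A S : Set (SPoly n)) : SPoly n → Prop
  | base {s : SPoly n} : s ∈ insert (1 : SPoly n) S → QMemIn A S s
  | add {p q : SPoly n} : QMemIn A S p → QMemIn A S q → QMemIn A S (p + q)
  | mul_sq {a p : SPoly n} : a ∈ A → QMemIn A S p → QMemIn A S (a ^ 2 * p)

/-- The quadratic module generated by `S` in `𝒮`. -/
def QM (S : Set (SPoly n)) : Set (SPoly n) := {x | QMemIn Set.univ S x}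

/-- The set `C^ς = {ς(p c p⋆) : p ∈ ℝ⟨x⟩, c ∈ {1} ∪ C}`. -/
def Csig (C : Set (NCSPoly n)) : Set (SPoly n) :=
  {x | ∃ p : NCSPoly n, IsFreePoly p ∧ ∃ c ∈ insert (1 : NCSPoly n) C,
    x = sig (p * c * ncStar p)}

/-- A balanced constraint set: closed under `⋆`, and non-symmetric elements come in `±` pairs. -/
def Balanced (C : Set (NCSPoly n)) : Prop :=
  (∀ c ∈ C, ncStar c ∈ C) ∧ ∀ c ∈ C, c ≠ ncStar c → -c ∈ C

/-- An algebraically bounded constraint set: `N - x_1^2 - ⋯ - x_n^2 = ∑ p_i c_i p_i⋆` with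
`c_i ∈ {1} ∪ C ∩ ℝ⟨x⟩` and `p_i ∈ ℝ⟨x⟩`. -/
def AlgBounded (C : Set (NCSPoly n)) : Prop :=
  ∃ N : ℝ, 0 < N ∧ ∃ (m : ℕ) (p c : Fin m → NCSPoly n),
    (∀ i, IsFreePoly (p i)) ∧
    (∀ i, c i = 1 ∨ (c i ∈ C ∧ IsFreePoly (c i))) ∧
    ncConst N - ∑ j : Fin n, ncX j ^ 2 = ∑ i, p i * c i * ncStar (p i)

/-- The truncated quadratic module `M(C)_d`. -/
def MCd (C : Set (NCSPoly n)) (d : ℕ) : Set (SPoly n) :=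
  {x | ∃ (K : ℕ) (f c : Fin K → NCSPoly n),
    (∀ i, c i ∈ insert (1 : NCSPoly n) C) ∧
    (∀ i, ncDeg (f i * c i * ncStar (f i)) ≤ 2 * d) ∧
    x = ∑ i, sig (f i * c i * ncStar (f i))}

end StatePoly

namespace StatePoly

/-- Membership of a truncated linear functional `L : 𝒮_{2d} → ℝ` in the dual cone
`(M(C)_d)^∨`: `L(ς(f c f⋆)) ≥ 0` for all `c ∈ {1} ∪ C` and `f ∈ 𝐒` with
`deg(f c f⋆) ≤ 2d` (values of `L` referred to via the extension-by-zero `lext`). -/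
def InDualCone {n : ℕ} (d : ℕ) (C : Set (NCSPoly n))
    (L : SPolyLe n (2 * d) →ₗ[ℝ] ℝ) : Prop :=
  ∀ f c : NCSPoly n, c ∈ insert (1 : NCSPoly n) C →
    ncDeg (f * c * ncStar f) ≤ 2 * d → 0 ≤ lext L (sig (f * c * ncStar f))

/-- The strengthened boundedness hypothesis: for some `N > 0`, the element
`N − x₁² − ⋯ − xₙ²` is a conic combination of elements of `C ∩ ℝ⟨x⟩_2` and hermitian
squares `pp⋆` with `p ∈ ℝ⟨x⟩_1`. -/
def StrongBounded {n : ℕ} (C : Set (NCSPoly n)) : Prop :=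
  ∃ N : ℝ, 0 < N ∧ ∃ (m : ℕ) (t : Fin m → ℝ) (g : Fin m → NCSPoly n),
    (∀ i, 0 ≤ t i) ∧
    (∀ i, (g i ∈ C ∧ IsFreePoly (g i) ∧ ncDeg (g i) ≤ 2) ∨
      (∃ p : NCSPoly n, IsFreePoly p ∧ ncDeg p ≤ 1 ∧ g i = p * ncStar p)) ∧
    ncConst N - ∑ j : Fin n, ncX j ^ 2 = ∑ i, ncConst (t i) * g i

end StatePoly

namespace LinearMap.BilinForm

theorem IsPosSemidef.apply_eq_zero_of_apply_self_eq_zero {K V : Type*} [Field K] [LinearOrder K]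
    [IsStrictOrderedRing K] [AddCommGroup V] [Module K V] {B : LinearMap.BilinForm K V}
    (hB : B.IsPosSemidef) {x : V} (hx : B x x = 0) (y : V) : B x y = 0 := by
  have hquad : ∀ t : K, 0 ≤ 0 * (t * t) + 2 * B x y * t + B y y := fun t => by
    have := hB.isNonneg.nonneg (t • x + y)
    simp only [map_add, map_smul, LinearMap.add_apply, LinearMap.smul_apply, smul_eq_mul, hx,
      hB.isSymm.eq y x] at this
    linarith
  have := discrim_le_zero hquad
  rw [discrim] at this
  nlinarith [sq_nonneg (B x y)]

end LinearMap.BilinForm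

namespace StatePoly

variable {n : ℕ}

open MvPolynomial

lemma sigWordL_reverse (l : List (Fin n)) : sigWordL l.reverse = sigWordL l := by
  rcases eq_or_ne l [] with rfl | h
  · rfl
  · rw [sigWordL, sigWordL, dif_neg h, dif_neg (List.reverse_ne_nil_iff.mpr h)]
    exact congrArg X (Quotient.sound (Or.inr rfl))

lemma sigWordL_out (q : SW n) : sigWordL (Quotient.out q).1 = X q := by
  rw [sigWordL, dif_neg (Quotient.out q).2]
  exact congrArg X (Quotient.out_eq q)

lemma length_out (q : SW n) : (Quotient.out q).1.length = swDeg q := by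
  conv_rhs => rw [← Quotient.out_eq q]
  rfl

noncomputable def sigLinear : NCSPoly n →ₗ[SPoly n] SPoly n :=
  Finsupp.linearCombination (SPoly n) (fun w : Word n => sigWordL (FreeMonoid.toList w)) ∘ₗ
    (MonoidAlgebra.coeffLinearEquiv (SPoly n)).toLinearMap

lemma sigLinear_apply (f : NCSPoly n) : sigLinear f = sig f := rfl

lemma sig_add (f g : NCSPoly n) : sig (f + g) = sig f + sig g := map_add sigLinear f g

lemma sig_single (w : Word n) (s : SPoly n) :
    sig (MonoidAlgebra.single w s) = s * sigWordL (FreeMonoid.toList w) := by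
  rw [sig, MonoidAlgebra.coeff_single]
  exact Finsupp.sum_single_index (zero_mul _)

lemma ncStar_eq_mapDomain (f : NCSPoly n) : ncStar f = MonoidAlgebra.mapDomain wordRev f := rfl

lemma ncStar_single (w : Word n) (s : SPoly n) :
    ncStar (MonoidAlgebra.single w s) = MonoidAlgebra.single (wordRev w) s :=
  MonoidAlgebra.mapDomain_single

lemma ncStar_add (f g : NCSPoly n) : ncStar (f + g) = ncStar f + ncStar g :=
  MonoidAlgebra.mapDomain_add _ _ _

lemma ncStar_smul {S : Type*} [Monoid S] [DistribMulAction S (SPoly n)] (r : S) (f : NCSPoly n) :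
    ncStar (r • f) = r • ncStar f :=
  MonoidAlgebra.mapDomain_smul _ _ _

lemma ncStar_mul (f g : NCSPoly n) : ncStar (f * g) = ncStar g * ncStar f := by
  induction f using MonoidAlgebra.induction_linear with
  | zero => simp [ncStar_eq_mapDomain]
  | add f f' hf hf' => rw [add_mul, ncStar_add, ncStar_add, hf, hf', mul_add]
  | single v s =>
    induction g using MonoidAlgebra.induction_linear with
    | zero => simp [ncStar_eq_mapDomain]
    | add g g' hg hg' => rw [mul_add, ncStar_add, ncStar_add, hg, hg', add_mul]
    | single w t =>
      simp only [MonoidAlgebra.single_mul_single, ncStar_single, wordRev, FreeMonoid.reverse_mul,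
        mul_comm s t]

lemma ncStar_ncStar (f : NCSPoly n) : ncStar (ncStar f) = f := by
  induction f using MonoidAlgebra.induction_linear with
  | zero => simp [ncStar_eq_mapDomain]
  | add f f' hf hf' => rw [ncStar_add, ncStar_add, hf, hf']
  | single w s => rw [ncStar_single, ncStar_single, wordRev, wordRev, FreeMonoid.reverse_reverse]

lemma sig_ncStar (f : NCSPoly n) : sig (ncStar f) = sig f := by
  induction f using MonoidAlgebra.induction_linear with
  | zero => simp [ncStar_eq_mapDomain]
  | add f f' hf hf' => rw [ncStar_add, sig_add, sig_add, hf, hf']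
  | single w s =>
    rw [ncStar_single, sig_single, sig_single]
    exact congrArg (s * ·) (sigWordL_reverse _)

lemma mul_ncConst (f : NCSPoly n) (r : ℝ) : f * ncConst r = r • f :=
  (Algebra.commutes r f).symm.trans (Algebra.smul_def r f).symm

lemma ncConst_mul (r : ℝ) (f : NCSPoly n) : ncConst r * f = r • f :=
  (Algebra.smul_def r f).symm

lemma ncStar_ncX (j : Fin n) : ncStar (ncX j) = ncX j := by
  rw [ncX, ncStar_single, wordRev, FreeMonoid.reverse_of]

lemma sDeg_le_iff {p : SPoly n} {k : ℕ} : sDeg p ≤ k ↔ ∀ m ∈ p.support, monoWeight m ≤ k :=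
  Finset.sup_le_iff

lemma monoWeight_add (a b : SW n →₀ ℕ) : monoWeight (a + b) = monoWeight a + monoWeight b :=
  Finsupp.sum_add_index' (fun _ => zero_mul _) (fun _ _ _ => add_mul _ _ _)

lemma monoWeight_single (q : SW n) (e : ℕ) : monoWeight (Finsupp.single q e) = e * swDeg q :=
  Finsupp.sum_single_index (zero_mul _)

lemma sDeg_mul_le (p q : SPoly n) : sDeg (p * q) ≤ sDeg p + sDeg q := by
  classical
  refine sDeg_le_iff.mpr fun m hm => ?_
  obtain ⟨m₁, hm₁, m₂, hm₂, rfl⟩ := Finset.mem_add.mp (support_mul p q hm)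
  rw [monoWeight_add]
  exact add_le_add (Finset.le_sup hm₁) (Finset.le_sup hm₂)

lemma sDeg_X (q : SW n) : sDeg (X q : SPoly n) = swDeg q := by
  classical
  rw [sDeg, support_X, Finset.sup_singleton, monoWeight_single, one_mul]

lemma sDeg_sigWordL_le (l : List (Fin n)) : sDeg (sigWordL l) ≤ l.length := by
  rcases eq_or_ne l [] with rfl | h
  · simp [sigWordL, sDeg_one]
  · rw [sigWordL, dif_neg h]
    exact (sDeg_X (Quotient.mk (wordSetoid n) ⟨l, h⟩ : SW n)).le

lemma ncDeg_le_iff {f : NCSPoly n} {k : ℕ} :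
    ncDeg f ≤ k ↔ ∀ w, f.coeff w ≠ 0 → sDeg (f.coeff w) + (FreeMonoid.toList w).length ≤ k := by
  simp only [ncDeg, Finset.sup_le_iff, Finsupp.mem_support_iff]

lemma sDeg_coeff_add_length_le {f : NCSPoly n} {w : Word n} (hw : f.coeff w ≠ 0) :
    sDeg (f.coeff w) + (FreeMonoid.toList w).length ≤ ncDeg f :=
  ncDeg_le_iff.mp le_rfl w hw

lemma sDeg_coeff_le (f : NCSPoly n) (w : Word n) :
    sDeg (f.coeff w) ≤ ncDeg f - (FreeMonoid.toList w).length := by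
  by_cases hw : f.coeff w = 0
  · simp [hw, sDeg_zero]
  · have := sDeg_coeff_add_length_le hw
    omega

noncomputable def NCSPolyLe (n k : ℕ) : Submodule ℝ (NCSPoly n) where
  carrier := {f | ncDeg f ≤ k}
  add_mem' {f g} hf hg := ncDeg_le_iff.mpr fun w hw => by
    have hlen : (FreeMonoid.toList w).length ≤ k := by
      by_cases hfw : f.coeff w = 0
      · have hgw : g.coeff w ≠ 0 := fun hgw => hw (by
          rw [MonoidAlgebra.coeff_add, Finsupp.add_apply, hfw, hgw, add_zero])
        exact le_add_self.trans ((sDeg_coeff_add_length_le hgw).trans hg)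
      · exact le_add_self.trans ((sDeg_coeff_add_length_le hfw).trans hf)
    have := sDeg_add_le (f.coeff w) (g.coeff w)
    have := sDeg_coeff_le f w
    have := sDeg_coeff_le g w
    change ncDeg f ≤ k at hf
    change ncDeg g ≤ k at hg
    show sDeg (f.coeff w + g.coeff w) + _ ≤ k
    omega
  zero_mem' := Nat.zero_le _
  smul_mem' r f hf := ncDeg_le_iff.mpr fun w hw => by
    have hfw : f.coeff w ≠ 0 := fun h => hw (by rw [MonoidAlgebra.coeff_smul_apply, h, smul_zero])
    have := sDeg_smul_le r (f.coeff w)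
    have := sDeg_coeff_add_length_le hfw
    change ncDeg f ≤ k at hf
    show sDeg (r • f.coeff w) + _ ≤ k
    omega

lemma mem_NCSPolyLe {f : NCSPoly n} {k : ℕ} : f ∈ NCSPolyLe n k ↔ ncDeg f ≤ k := Iff.rfl

lemma single_mem_NCSPolyLe {w : Word n} {s : SPoly n} {k : ℕ}
    (h : sDeg s + (FreeMonoid.toList w).length ≤ k) : MonoidAlgebra.single w s ∈ NCSPolyLe n k := by
  classical
  refine ncDeg_le_iff.mpr fun v hv => ?_
  rw [MonoidAlgebra.coeff_single, Finsupp.single_apply] at hv ⊢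
  split_ifs at hv ⊢ with hwv
  · exact hwv ▸ h
  · exact absurd rfl hv

lemma coeff_ncStar (f : NCSPoly n) (w : Word n) : (ncStar f).coeff w = f.coeff (wordRev w) := by
  have hrev : Function.Involutive (wordRev (n := n)) := fun _ => FreeMonoid.reverse_reverse
  conv_lhs => rw [← hrev w]
  exact Finsupp.mapDomain_apply hrev.injective f.coeff (wordRev w)

lemma ncDeg_mul_le (f g : NCSPoly n) : ncDeg (f * g) ≤ ncDeg f + ncDeg g := by
  rw [← mem_NCSPolyLe, MonoidAlgebra.mul_def]
  refine Submodule.finsuppSum_mem _ _ _ _ fun v hv =>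
    Submodule.finsuppSum_mem _ _ _ _ fun w hw => single_mem_NCSPolyLe ?_
  have := sDeg_coeff_add_length_le hv
  have := sDeg_coeff_add_length_le hw
  have := sDeg_mul_le (f.coeff v) (g.coeff w)
  simp only [FreeMonoid.toList_mul, List.length_append]
  omega

lemma ncDeg_ncStar_le (f : NCSPoly n) : ncDeg (ncStar f) ≤ ncDeg f := by
  refine ncDeg_le_iff.mpr fun w hw => ?_
  rw [coeff_ncStar] at hw ⊢
  have h := sDeg_coeff_add_length_le hw
  rwa [show (FreeMonoid.toList (wordRev w)).length = (FreeMonoid.toList w).length from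
    List.length_reverse] at h

lemma sDeg_sig_le (f : NCSPoly n) : sDeg (sig f) ≤ ncDeg f := by
  refine show sig f ∈ SPolyLe n (ncDeg f) from
    Submodule.finsuppSum_mem ℝ (SPolyLe n _) _ _ fun w hw => ?_
  have := sDeg_coeff_add_length_le hw
  have := sDeg_mul_le (f.coeff w) (sigWordL (FreeMonoid.toList w))
  have := sDeg_sigWordL_le (FreeMonoid.toList w)
  show sDeg (f.coeff w * sigWordL (FreeMonoid.toList w)) ≤ ncDeg f
  omega

lemma ncDeg_one : ncDeg (1 : NCSPoly n) = 0 :=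
  Nat.le_zero.mp (single_mem_NCSPolyLe (by rw [sDeg_one]; rfl))

lemma ncDeg_ncX_le (j : Fin n) : ncDeg (ncX j) ≤ 1 :=
  single_mem_NCSPolyLe (by rw [sDeg_one]; rfl)

lemma ncDeg_mul_mul_ncStar_le (f c : NCSPoly n) :
    ncDeg (f * c * ncStar f) ≤ 2 * ncDeg f + ncDeg c := by
  have := ncDeg_mul_le (f * c) (ncStar f)
  have := ncDeg_mul_le f c
  have := ncDeg_ncStar_le f
  omega

theorem _root_.Finsupp.induction_on_single_one {α : Type*} {motive : (α →₀ ℕ) → Prop}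
    (m : α →₀ ℕ) (zero : motive 0) (single_add : ∀ a m, motive m → motive (.single a 1 + m)) :
    motive m := by
  classical
  rw [← Finsupp.toMultiset_toFinsupp m]
  induction m.toMultiset using Multiset.induction_on with
  | empty => simpa using zero
  | cons a s ih =>
    rw [← Multiset.singleton_add, Multiset.toFinsupp_add, Multiset.toFinsupp_singleton]
    exact single_add _ _ ih

lemma monomial_single_one_add (q : SW n) (m : SW n →₀ ℕ) :
    (monomial (Finsupp.single q 1 + m) 1 : SPoly n) = X q * monomial m 1 := by
  rw [monomial_single_add, pow_one]

lemma monoWeight_single_one_add (q : SW n) (m : SW n →₀ ℕ) :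
    monoWeight (Finsupp.single q 1 + m) = swDeg q + monoWeight m := by
  rw [monoWeight_add, monoWeight_single, one_mul]

lemma sDeg_monomial_le (m : SW n →₀ ℕ) (r : ℝ) : sDeg (monomial m r : SPoly n) ≤ monoWeight m :=
  sDeg_le_iff.mpr fun _ hm' => (congrArg monoWeight (Finset.mem_singleton.mp
    (support_monomial_subset hm'))).le

noncomputable def ncMono (v : List (Fin n)) (s : SPoly n) : NCSPoly n :=
  MonoidAlgebra.single (FreeMonoid.ofList v) s

lemma ncDeg_ncMono_le (v : List (Fin n)) (s : SPoly n) : ncDeg (ncMono v s) ≤ sDeg s + v.length :=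
  single_mem_NCSPolyLe (by rw [FreeMonoid.toList_ofList])

lemma ncMono_append_singleton (v : List (Fin n)) (j : Fin n) (s : SPoly n) :
    ncMono (v ++ [j]) s = ncMono v s * ncX j := by
  rw [ncMono, ncMono, ncX, MonoidAlgebra.single_mul_single, mul_one, FreeMonoid.ofList_append,
    FreeMonoid.ofList_singleton]

lemma exists_monomial_eq_mul_sigWordL (m : SW n →₀ ℕ) (a b : ℕ) (hm : monoWeight m ≤ a + b) :
    ∃ (m₁ : SW n →₀ ℕ) (v : List (Fin n)) (s₂ : SPoly n) (w : List (Fin n)),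
      monoWeight m₁ + v.length ≤ a ∧ sDeg s₂ + w.length ≤ b ∧
      monomial m 1 = monomial m₁ 1 * s₂ * sigWordL (v ++ w.reverse) := by
  induction m using Finsupp.induction_on_single_one generalizing b with
  | zero => exact ⟨0, [], 1, [], by simp [monoWeight], by simp [sDeg_one], by simp [sigWordL]⟩
  | single_add q m ih =>
    rw [monoWeight_single_one_add] at hm
    rw [monomial_single_one_add]
    by_cases hq : swDeg q ≤ b
    · obtain ⟨m₁, v, s₂, w, h₁, h₂, hmw⟩ := ih (b - swDeg q) (by omega)
      refine ⟨m₁, v, X q * s₂, w, h₁, ?_, by rw [hmw]; ring⟩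
      have := sDeg_mul_le (X q) s₂
      rw [sDeg_X] at this
      omega
    · -- the word of `q` is cut in two, its first `swDeg q - b` letters going to the left factor
      set u := (Quotient.out q).1
      have hu : u.length = swDeg q := length_out q
      refine ⟨m, u.take (swDeg q - b), 1, (u.drop (swDeg q - b)).reverse, ?_, ?_, ?_⟩
      · rw [List.length_take]
        omega
      · rw [sDeg_one, List.length_reverse, List.length_drop]
        omega
      · rw [List.reverse_reverse, List.take_append_drop, sigWordL_out]
        ring

noncomputable def sigForm (Λ : SPoly n →ₗ[ℝ] ℝ) : LinearMap.BilinForm ℝ (NCSPoly n) :=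
  LinearMap.mk₂ ℝ (fun f g => Λ (sig (f * ncStar g)))
    (fun f f' g => by simp only [add_mul, ← sigLinear_apply, map_add])
    (fun r f g => by simp only [smul_mul_assoc, ← sigLinear_apply, LinearMap.map_smul_of_tower,
      map_smul, smul_eq_mul])
    (fun f g g' => by simp only [ncStar_add, mul_add, ← sigLinear_apply, map_add])
    (fun r f g => by simp only [ncStar_smul, mul_smul_comm, ← sigLinear_apply,
      LinearMap.map_smul_of_tower, map_smul, smul_eq_mul])

lemma sigForm_apply (Λ : SPoly n →ₗ[ℝ] ℝ) (f g : NCSPoly n) :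
    sigForm Λ f g = Λ (sig (f * ncStar g)) := rfl

lemma sigForm_comm (Λ : SPoly n →ₗ[ℝ] ℝ) (f g : NCSPoly n) : sigForm Λ f g = sigForm Λ g f := by
  rw [sigForm_apply, sigForm_apply, ← sig_ncStar, ncStar_mul, ncStar_ncStar]

lemma sigForm_ncMono (Λ : SPoly n →ₗ[ℝ] ℝ) (v w : List (Fin n)) (s t : SPoly n) :
    sigForm Λ (ncMono v s) (ncMono w t) = Λ (s * t * sigWordL (v ++ w.reverse)) := by
  rw [sigForm_apply, ncMono, ncMono, ncStar_single, MonoidAlgebra.single_mul_single, sig_single]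
  rfl

def IsNonnegOnMCd (d : ℕ) (C : Set (NCSPoly n)) (Λ : SPoly n →ₗ[ℝ] ℝ) : Prop :=
  ∀ f c : NCSPoly n, c ∈ insert (1 : NCSPoly n) C →
    ncDeg (f * c * ncStar f) ≤ 2 * d → 0 ≤ Λ (sig (f * c * ncStar f))

lemma lext_eq_of_comp_subtype {k : ℕ} {L : SPolyLe n k →ₗ[ℝ] ℝ} {Λ : SPoly n →ₗ[ℝ] ℝ}
    (hΛ : Λ ∘ₗ (SPolyLe n k).subtype = L) {p : SPoly n} (hp : sDeg p ≤ k) : lext L p = Λ p := by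
  rw [lext, dif_pos hp, ← hΛ]
  rfl

lemma InDualCone.exists_extension {d : ℕ} {C : Set (NCSPoly n)} {L : SPolyLe n (2 * d) →ₗ[ℝ] ℝ}
    (hL : InDualCone d C L) :
    ∃ Λ : SPoly n →ₗ[ℝ] ℝ, Λ ∘ₗ (SPolyLe n (2 * d)).subtype = L ∧ IsNonnegOnMCd d C Λ := by
  obtain ⟨Λ, hΛ⟩ := LinearMap.exists_extend L
  refine ⟨Λ, hΛ, fun f c hc hdeg => ?_⟩
  rw [← lext_eq_of_comp_subtype hΛ ((sDeg_sig_le _).trans hdeg)]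
  exact hL f c hc hdeg

section NonnegOnMCd

variable {d : ℕ} {C : Set (NCSPoly n)} {Λ : SPoly n →ₗ[ℝ] ℝ} (hΛ : IsNonnegOnMCd d C Λ)
include hΛ

lemma IsNonnegOnMCd.sigForm_self_nonneg {f : NCSPoly n} (hf : ncDeg f ≤ d) :
    0 ≤ sigForm Λ f f := by
  have hdeg := ncDeg_mul_mul_ncStar_le f 1
  rw [ncDeg_one] at hdeg
  simpa only [mul_one, sigForm_apply] using hΛ f 1 (Set.mem_insert _ _) (by omega)

lemma IsNonnegOnMCd.isPosSemidef_sigForm_restrict :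
    ((sigForm Λ).restrict (NCSPolyLe n d)).IsPosSemidef where
  eq f g := sigForm_comm Λ f g
  nonneg f := hΛ.sigForm_self_nonneg f.2

lemma IsNonnegOnMCd.sigForm_eq_zero_of_self {f g : NCSPoly n} (hf : ncDeg f ≤ d)
    (hg : ncDeg g ≤ d) (hff : sigForm Λ f f = 0) : sigForm Λ f g = 0 :=
  hΛ.isPosSemidef_sigForm_restrict.apply_eq_zero_of_apply_self_eq_zero
    (x := (⟨f, hf⟩ : NCSPolyLe n d)) hff ⟨g, hg⟩

end NonnegOnMCd

section StrongBounded

variable {d : ℕ} {C : Set (NCSPoly n)} {Λ : SPoly n →ₗ[ℝ] ℝ} (hΛ : IsNonnegOnMCd d C Λ)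
  (hC : StrongBounded C)
include hΛ hC

lemma IsNonnegOnMCd.exists_sum_sigForm_mul_ncX_le :
    ∃ N : ℝ, ∀ F : NCSPoly n, ncDeg F + 1 ≤ d →
      ∑ j, sigForm Λ (F * ncX j) (F * ncX j) ≤ N * sigForm Λ F F := by
  obtain ⟨N, -, m, t, g, ht, hg, hbound⟩ := hC
  refine ⟨N, fun F hF => ?_⟩
  have hterm : ∀ i, 0 ≤ Λ (sig (F * g i * ncStar F)) := fun i => by
    rcases hg i with ⟨hgC, -, hgdeg⟩ | ⟨p, -, hpdeg, hgp⟩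
    · have := ncDeg_mul_mul_ncStar_le F (g i)
      exact hΛ F (g i) (Set.mem_insert_of_mem _ hgC) (by omega)
    · have hFp : ncDeg (F * p) ≤ d := (ncDeg_mul_le F p).trans (by omega)
      have := hΛ.sigForm_self_nonneg hFp
      rwa [sigForm_apply, ncStar_mul, ← mul_assoc, mul_assoc F, ← hgp] at this
  have hconj : N • (F * ncStar F) - ∑ j, F * ncX j * ncStar (F * ncX j) =
      ∑ i, t i • (F * g i * ncStar F) :=
    calc N • (F * ncStar F) - ∑ j, F * ncX j * ncStar (F * ncX j)
        = F * (ncConst N - ∑ j, ncX j ^ 2) * ncStar F := by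
          simp only [mul_sub, sub_mul, mul_ncConst, smul_mul_assoc, Finset.mul_sum,
            Finset.sum_mul, ncStar_mul, ncStar_ncX, pow_two, mul_assoc]
      _ = ∑ i, t i • (F * g i * ncStar F) := by
          simp only [hbound, Finset.mul_sum, Finset.sum_mul, ncConst_mul, mul_smul_comm,
            smul_mul_assoc]
  have hΦ := congrArg (Λ ∘ₗ sigLinear.restrictScalars ℝ) hconj
  simp only [map_sub, map_smul, map_sum, LinearMap.comp_apply, LinearMap.restrictScalars_apply,
    sigLinear_apply, smul_eq_mul] at hΦ
  have := Finset.sum_nonneg fun i (_ : i ∈ Finset.univ) => mul_nonneg (ht i) (hterm i)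
  simp only [sigForm_apply]
  linarith

lemma IsNonnegOnMCd.sigForm_mul_ncX_self_eq_zero {F : NCSPoly n}
    (hF : ncDeg F + 1 ≤ d) (hFF : sigForm Λ F F = 0) (j : Fin n) :
    sigForm Λ (F * ncX j) (F * ncX j) = 0 := by
  obtain ⟨N, hN⟩ := hΛ.exists_sum_sigForm_mul_ncX_le hC
  have hnonneg : ∀ i, 0 ≤ sigForm Λ (F * ncX i) (F * ncX i) := fun i =>
    hΛ.sigForm_self_nonneg ((ncDeg_mul_le F (ncX i)).trans (by have := ncDeg_ncX_le i; omega))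
  have hsum := hN F hF
  rw [hFF, mul_zero] at hsum
  exact le_antisymm
    ((Finset.single_le_sum (fun i _ => hnonneg i) (Finset.mem_univ j)).trans hsum) (hnonneg j)

lemma IsNonnegOnMCd.sigForm_ncMono_self_eq_zero_of_nil {s : SPoly n}
    (hs : sigForm Λ (ncMono [] s) (ncMono [] s) = 0) (v : List (Fin n)) (hv : sDeg s + v.length ≤ d) :
    sigForm Λ (ncMono v s) (ncMono v s) = 0 := by
  induction v using List.reverseRecOn with
  | nil => exact hs
  | append_singleton v j ih =>
    rw [List.length_append, List.length_singleton] at hv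
    rw [ncMono_append_singleton]
    exact hΛ.sigForm_mul_ncX_self_eq_zero hC ((add_le_add_left (ncDeg_ncMono_le v s) 1).trans
      (by omega)) (ih (by omega)) j

variable (hΛ1 : Λ 1 = 0)
include hΛ1

lemma IsNonnegOnMCd.sigForm_ncMono_nil_self_eq_zero (m : SW n →₀ ℕ) (hm : monoWeight m ≤ d) :
    sigForm Λ (ncMono [] (monomial m 1)) (ncMono [] (monomial m 1)) = 0 := by
  induction m using Finsupp.induction_on_single_one with
  | zero => simpa [sigForm_ncMono, sigWordL] using hΛ1
  | single_add q m ih =>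
    rw [monoWeight_single_one_add] at hm
    rw [monomial_single_one_add]
    -- `X q = ς(u)` for the word `u` of `q`, so `Λ((X q · s)²) = Λ(ς(f g⋆))` for `f = s u`,
    -- `g = X q · s`, and `f` is isotropic.
    set u := (Quotient.out q).1
    set s : SPoly n := monomial m 1
    have hu : u.length = swDeg q := length_out q
    have hs : sDeg s ≤ monoWeight m := sDeg_monomial_le m 1
    have hf := hΛ.sigForm_ncMono_self_eq_zero_of_nil hC (ih (by omega)) u (by omega)
    have hg : ncDeg (ncMono [] (X q * s)) ≤ d := by
      have := sDeg_mul_le (X q) s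
      rw [sDeg_X] at this
      exact (ncDeg_ncMono_le [] _).trans (by rw [List.length_nil]; omega)
    have hfg := hΛ.sigForm_eq_zero_of_self ((ncDeg_ncMono_le u s).trans (by omega)) hg hf
    rw [sigForm_ncMono, List.reverse_nil, List.append_nil, sigWordL_out] at hfg
    rw [sigForm_ncMono, ← hfg, List.reverse_nil, List.append_nil, sigWordL, dif_pos rfl]
    congr 1
    ring

lemma IsNonnegOnMCd.sigForm_ncMono_self_eq_zero (m : SW n →₀ ℕ) (v : List (Fin n))
    (hm : monoWeight m + v.length ≤ d) :
    sigForm Λ (ncMono v (monomial m 1)) (ncMono v (monomial m 1)) = 0 := by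
  have := sDeg_monomial_le m (1 : ℝ)
  exact hΛ.sigForm_ncMono_self_eq_zero_of_nil hC
    (hΛ.sigForm_ncMono_nil_self_eq_zero hC hΛ1 m (by omega)) v (by omega)

lemma IsNonnegOnMCd.apply_monomial_eq_zero (m : SW n →₀ ℕ) (hm : monoWeight m ≤ 2 * d) :
    Λ (monomial m 1) = 0 := by
  obtain ⟨m₁, v, s₂, w, h₁, h₂, hmw⟩ := exists_monomial_eq_mul_sigWordL m d d (by omega)
  rw [hmw, ← sigForm_ncMono]
  refine hΛ.sigForm_eq_zero_of_self ?_ ((ncDeg_ncMono_le w s₂).trans h₂)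
    (hΛ.sigForm_ncMono_self_eq_zero hC hΛ1 m₁ v h₁)
  have := sDeg_monomial_le m₁ (1 : ℝ)
  exact (ncDeg_ncMono_le v _).trans (by omega)

end StrongBounded

lemma eq_zero_of_apply_monomial_eq_zero {k : ℕ} {L : SPolyLe n k →ₗ[ℝ] ℝ} {Λ : SPoly n →ₗ[ℝ] ℝ}
    (hΛ : Λ ∘ₗ (SPolyLe n k).subtype = L) (h : ∀ m, monoWeight m ≤ k → Λ (monomial m 1) = 0) :
    L = 0 := by
  refine LinearMap.ext fun ⟨p, hp⟩ => ?_
  rw [← hΛ, LinearMap.zero_apply]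
  change Λ p = 0
  rw [← p.support_sum_monomial_coeff, map_sum]
  refine Finset.sum_eq_zero fun m hm => ?_
  rw [← mul_one (coeff m p), ← smul_eq_mul, ← smul_monomial, map_smul,
    h m (sDeg_le_iff.mp hp m hm), smul_zero]

theorem statement_14_general (n d : ℕ) (C : Set (NCSPoly n))
    (hsb : StrongBounded C)
    (L : SPolyLe n (2 * d) →ₗ[ℝ] ℝ) (hdual : InDualCone d C L)
    (h1 : lext L 1 = 0) :
    L = 0 := by
  obtain ⟨Λ, hext, hΛ⟩ := hdual.exists_extension
  have hΛ1 : Λ 1 = 0 := by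
    rwa [← lext_eq_of_comp_subtype hext (by rw [sDeg_one]; exact Nat.zero_le _)]
  exact eq_zero_of_apply_monomial_eq_zero hext (hΛ.apply_monomial_eq_zero hsb hΛ1)

/-- Lemma `l:L0`.
Let `C ⊆ 𝐒` be balanced and suppose `N − x₁² − ⋯ − xₙ²` is a conic combination of
elements of `C ∩ ℝ⟨x⟩_2` and hermitian squares of elements of `ℝ⟨x⟩_1` for some `N > 0`.
If `L ∈ (M(C)_d)^∨` and `L(1) = 0`, then `L = 0`. -/
theorem statement_14 (n d : ℕ) (hn : 1 ≤ n) (C : Set (NCSPoly n))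
    (hbal : Balanced C) (hsb : StrongBounded C)
    (L : SPolyLe n (2 * d) →ₗ[ℝ] ℝ) (hdual : InDualCone d C L)
    (h1 : lext L 1 = 0) :
    L = 0 :=
  statement_14_general n d C hsb L hdual h1

end StatePoly
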